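/- Let n ≥ 2 and c ∈ (0,1) rational, and set Δ_c = {(x_1,…,x_n) ∈ ℝ^n : x_i ≥ 0 for all i, x_1+…+x_n ≤ c}. Let L ∈ ℝ and let f : Δ_c → ℝ be convex with f(x) ≥ L for all x ∈ Δ_c. Then for every sufficiently large integer k with kc ∈ ℤ one has ∑_{α ∈ Δ_c ∩ (1/k)ℤ^n} f(α) ≥ k^n ∫_{Δ_{c−(n−1)/k}} f dμ − k^n L Vol(Δ_{c−(n−1)/k}) + L · #(Δ_c ∩ (1/k)ℤ^n), where μ is Lebesgue measure, Vol denotes Lebesgue volume, and # denotes cardinality. -/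

import Mathlib

/-!
Subtracting `L` reduces the claim to `kⁿ ∫_{Δ_{c-(n-1)/k}} g ≤ ∑_α g(α)` for the convex function
`g = f - L ≥ 0`. The simplex `Δ_{c-(n-1)/k}` is covered by the lattice cubes `m/k + [0,1/k]ⁿ`
with `∑ mᵢ ≤ K - n`, all of which lie in `Δ_c`. On such a cube, convexity bounds `g` by the
multilinear interpolation of its values at the `2ⁿ` corners, whose integral is `(2k)⁻ⁿ` times
their sum. Finally, for each `e ∈ {0,1}ⁿ` the shift `m ↦ m + e` is injective, so every lattice
point of `Δ_c` is counted at most `2ⁿ` times.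
-/

open MeasureTheory

/-- The simplex `Δ_c = {x ∈ ℝⁿ : xᵢ ≥ 0, ∑ xᵢ ≤ c}`. -/
def simplexSet (n : ℕ) (c : ℝ) : Set (Fin n → ℝ) :=
  {x | (∀ i, 0 ≤ x i) ∧ ∑ i, x i ≤ c}

/-- The points `m ∈ ℕⁿ` with `∑ mᵢ ≤ K`; the lattice points of `Δ_c ∩ (1/k)ℤⁿ`
are exactly the points `m/k` for `m` in this finset, when `kc = K`. -/
def simplexLattice (n K : ℕ) : Finset (Fin n → ℕ) :=
  (Fintype.piFinset fun _ => Finset.range (K + 1)).filter fun m => ∑ i, m i ≤ K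

lemma ConvexOn.aestronglyMeasurable_restrict {E : Type*} [NormedAddCommGroup E]
    [NormedSpace ℝ E] [FiniteDimensional ℝ E] [MeasurableSpace E] [BorelSpace E]
    {μ : Measure E} [μ.IsAddHaarMeasure] {s : Set E} {f : E → ℝ} (hf : ConvexOn ℝ s f) :
    AEStronglyMeasurable f (μ.restrict s) := by
  rw [Measure.restrict_congr_set (interior_ae_eq_of_null_frontier (hf.1.addHaar_frontier μ)).symm]
  exact ((hf.subset interior_subset hf.1.interior).continuousOn isOpen_interior)
    |>.aestronglyMeasurable isOpen_interior.measurableSet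

lemma setIntegral_le_sum_setIntegral_of_subset_biUnion {α ι : Type*} [MeasurableSpace α]
    {μ : Measure α} {s : Set α} {t : Finset ι} {T : ι → Set α} {g : α → ℝ}
    (hs : MeasurableSet s) (hT : ∀ i ∈ t, MeasurableSet (T i)) (hsT : s ⊆ ⋃ i ∈ t, T i)
    (hg0 : ∀ i ∈ t, ∀ x ∈ T i, 0 ≤ g x) (hgi : ∀ i ∈ t, IntegrableOn g (T i) μ) :
    ∫ x in s, g x ∂μ ≤ ∑ i ∈ t, ∫ x in T i, g x ∂μ := by
  have hind0 : ∀ i ∈ t, 0 ≤ (T i).indicator g := fun i hi =>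
    Set.indicator_nonneg (hg0 i hi)
  have hind : ∀ x, s.indicator g x ≤ ∑ i ∈ t, (T i).indicator g x := by
    intro x
    by_cases hx : x ∈ s
    · obtain ⟨i, hi, hxi⟩ := Set.mem_iUnion₂.1 (hsT hx)
      rw [Set.indicator_of_mem hx, ← Set.indicator_of_mem hxi g]
      exact Finset.single_le_sum (fun j hj => hind0 j hj x) hi
    · rw [Set.indicator_of_notMem hx]
      exact Finset.sum_nonneg fun i hi => hind0 i hi x
  have hs0 : 0 ≤ s.indicator g := Set.indicator_nonneg fun x hx => by
    obtain ⟨i, hi, hxi⟩ := Set.mem_iUnion₂.1 (hsT hx)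
    exact hg0 i hi x hxi
  rw [← integral_indicator hs, Finset.sum_congr rfl fun i hi => (integral_indicator (hT i hi)).symm,
    ← integral_finsetSum _ fun i hi => (hgi i hi).integrable_indicator (hT i hi)]
  exact integral_mono_of_nonneg (ae_of_all _ hs0)
    (integrable_finsetSum _ fun i hi => (hgi i hi).integrable_indicator (hT i hi))
    (ae_of_all _ fun x => by simpa only [Finset.sum_apply] using hind x)

lemma natCast_ceil_sub_one_lt {y : ℝ} (hy : 0 < y) : ((⌈y⌉₊ - 1 : ℕ) : ℝ) < y := by
  rw [Nat.cast_sub (Nat.one_le_iff_ne_zero.2 (Nat.ceil_pos.2 hy).ne'), Nat.cast_one]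
  linarith [Nat.ceil_lt_add_one hy.le]

lemma natCast_ceil_sub_one_le {y : ℝ} (hy : 0 ≤ y) : ((⌈y⌉₊ - 1 : ℕ) : ℝ) ≤ y := by
  rcases hy.eq_or_lt with rfl | hy
  · simp
  · exact (natCast_ceil_sub_one_lt hy).le

lemma le_natCast_ceil_sub_one_add_one (y : ℝ) : y ≤ ((⌈y⌉₊ - 1 : ℕ) : ℝ) + 1 :=
  (Nat.le_ceil y).trans <| by exact_mod_cast (by omega : ⌈y⌉₊ ≤ ⌈y⌉₊ - 1 + 1)

section CornerWeight

variable {ι : Type*} [Fintype ι] [DecidableEq ι]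

/-- The weight of the corner `e ∈ {0,1}^ι` in the multilinear interpolation at the relative
position `t ∈ [0,1]^ι` of a cube. -/
def cornerWeight (t : ι → ℝ) (e : ι → Bool) : ℝ :=
  ∏ i, if e i then t i else 1 - t i

omit [DecidableEq ι] in
lemma cornerWeight_nonneg {t : ι → ℝ} (ht : ∀ i, t i ∈ Set.Icc (0 : ℝ) 1) (e : ι → Bool) :
    0 ≤ cornerWeight t e :=
  Finset.prod_nonneg fun i _ => by
    split_ifs
    · exact (ht i).1
    · exact sub_nonneg.2 (ht i).2

omit [DecidableEq ι] in
lemma continuous_cornerWeight (e : ι → Bool) : Continuous fun t : ι → ℝ => cornerWeight t e :=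
  continuous_finsetProd _ fun i _ => by split <;> fun_prop

lemma sum_cornerWeight (t : ι → ℝ) : ∑ e, cornerWeight t e = 1 := by
  simp only [cornerWeight]
  rw [← Fintype.prod_sum fun i (b : Bool) => if b then t i else 1 - t i]
  simp

lemma sum_cornerWeight_mul_toNat (t : ι → ℝ) (j : ι) :
    ∑ e, cornerWeight t e * (e j).toNat = t j := by
  let F : ι → Bool → ℝ := fun i b =>
    (if b then t i else 1 - t i) * if i = j then (b.toNat : ℝ) else 1
  have hF : ∀ e : ι → Bool, cornerWeight t e * (e j).toNat = ∏ i, F i (e i) := by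
    intro e
    rw [Finset.prod_mul_distrib, Finset.prod_ite_eq']
    simp [cornerWeight]
  simp_rw [hF, ← Fintype.prod_sum F, Fintype.sum_bool]
  rw [Fintype.prod_eq_single j fun i hi => by simp [F, hi]]
  simp [F]

lemma sum_cornerWeight_smul (t : ι → ℝ) :
    ∑ e, cornerWeight t e • (fun i => ((e i).toNat : ℝ)) = t := by
  ext j
  simpa [Finset.sum_apply] using sum_cornerWeight_mul_toNat t j

omit [DecidableEq ι] in
lemma setIntegral_pi_Icc_cornerWeight (a : ι → ℝ) {h : ℝ} (hh : 0 < h) (e : ι → Bool) :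
    ∫ x in Set.univ.pi fun i => Set.Icc (a i) (a i + h), cornerWeight (fun i => (x i - a i) / h) e
      = (h / 2) ^ Fintype.card ι := by
  have hlin (a : ℝ) : ∫ s in a..a + h, (s - a) / h = h / 2 := by
    rw [intervalIntegral.integral_div, intervalIntegral.integral_comp_sub_right (fun s => s)]
    simp only [sub_self, add_sub_cancel_left, integral_id, ne_eq, OfNat.ofNat_ne_zero,
      not_false_eq_true, zero_pow, sub_zero]
    field_simp
  have hcoord (b : Bool) (a : ℝ) :
      ∫ s in Set.Icc a (a + h), (if b then (s - a) / h else 1 - (s - a) / h) = h / 2 := by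
    rw [integral_Icc_eq_integral_Ioc, ← intervalIntegral.integral_of_le (by linarith)]
    cases b
    · simp only [Bool.false_eq_true, if_false]
      rw [intervalIntegral.integral_sub intervalIntegrable_const
        ((by fun_prop : Continuous fun s => (s - a) / h).intervalIntegrable _ _), hlin]
      simp only [intervalIntegral.integral_const, add_sub_cancel_left, smul_eq_mul, mul_one]
      ring
    · exact hlin a
  rw [volume_pi, Measure.restrict_pi_pi]
  simp only [cornerWeight]
  rw [integral_fintype_prod_eq_prod (fun i s => if e i then (s - a i) / h else 1 - (s - a i) / h)]
  simp [hcoord, div_pow]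

omit [Fintype ι] [DecidableEq ι] in
lemma mem_pi_Icc_add_smul_toNat (a : ι → ℝ) {h : ℝ} (hh : 0 ≤ h) (e : ι → Bool) :
    a + h • (fun i => ((e i).toNat : ℝ)) ∈ Set.univ.pi fun i => Set.Icc (a i) (a i + h) :=
  fun i _ => by cases hi : e i <;> simp [hi, hh]

lemma ConvexOn.le_sum_cornerWeight_mul {s : Set (ι → ℝ)} {g : (ι → ℝ) → ℝ}
    (hg : ConvexOn ℝ s g) {a x : ι → ℝ} {h : ℝ} (hh : 0 < h)
    (hQs : Set.univ.pi (fun i => Set.Icc (a i) (a i + h)) ⊆ s)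
    (hx : x ∈ Set.univ.pi fun i => Set.Icc (a i) (a i + h)) :
    g x ≤ ∑ e : ι → Bool, cornerWeight (fun i => (x i - a i) / h) e *
      g (a + h • fun i => ((e i).toNat : ℝ)) := by
  set t : ι → ℝ := fun i => (x i - a i) / h
  have ht : ∀ i, t i ∈ Set.Icc (0 : ℝ) 1 := fun i => by
    obtain ⟨h₁, h₂⟩ := hx i (Set.mem_univ i)
    constructor
    · exact div_nonneg (by linarith) hh.le
    · rw [div_le_one hh]; linarith
  have hxt : ∑ e, cornerWeight t e • (a + h • fun i => ((e i).toNat : ℝ)) = x := by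
    simp only [smul_add, Finset.sum_add_distrib, ← Finset.sum_smul, sum_cornerWeight, one_smul,
      smul_comm _ h, ← Finset.smul_sum, sum_cornerWeight_smul]
    ext i
    simp only [Pi.add_apply, Pi.smul_apply, smul_eq_mul, t]
    field_simp
    ring
  calc g x = g (∑ e, cornerWeight t e • (a + h • fun i => ((e i).toNat : ℝ))) := by rw [hxt]
    _ ≤ _ := hg.map_sum_le (fun e _ => cornerWeight_nonneg ht e) (sum_cornerWeight t)
        (fun e _ => hQs (mem_pi_Icc_add_smul_toNat a hh.le e))

lemma ConvexOn.setIntegral_pi_Icc_le {s : Set (ι → ℝ)} {g : (ι → ℝ) → ℝ}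
    (hg : ConvexOn ℝ s g) (a : ι → ℝ) {h : ℝ} (hh : 0 < h)
    (hQs : Set.univ.pi (fun i => Set.Icc (a i) (a i + h)) ⊆ s)
    (hgi : IntegrableOn g (Set.univ.pi fun i => Set.Icc (a i) (a i + h))) :
    ∫ x in Set.univ.pi (fun i => Set.Icc (a i) (a i + h)), g x
      ≤ (h / 2) ^ Fintype.card ι * ∑ e : ι → Bool, g (a + h • fun i => ((e i).toNat : ℝ)) := by
  have hwi : ∀ e ∈ Finset.univ, IntegrableOn (fun x => cornerWeight (fun i => (x i - a i) / h) e *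
      g (a + h • fun i => ((e i).toNat : ℝ))) (Set.univ.pi fun i => Set.Icc (a i) (a i + h)) :=
    fun e _ => (((continuous_cornerWeight e).comp (by fun_prop)).mul continuous_const)
      |>.continuousOn.integrableOn_compact (isCompact_univ_pi fun _ => isCompact_Icc)
  calc ∫ x in Set.univ.pi (fun i => Set.Icc (a i) (a i + h)), g x
      ≤ ∫ x in Set.univ.pi (fun i => Set.Icc (a i) (a i + h)),
          ∑ e : ι → Bool, cornerWeight (fun i => (x i - a i) / h) e *
            g (a + h • fun i => ((e i).toNat : ℝ)) :=
        setIntegral_mono_on hgi (integrable_finsetSum _ hwi)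
          (MeasurableSet.univ_pi fun _ => measurableSet_Icc)
          fun x hx => hg.le_sum_cornerWeight_mul hh hQs hx
    _ = ∑ e : ι → Bool, (h / 2) ^ Fintype.card ι * g (a + h • fun i => ((e i).toNat : ℝ)) := by
        rw [integral_finsetSum _ hwi]
        simp_rw [integral_mul_const, setIntegral_pi_Icc_cornerWeight a hh]
    _ = _ := by rw [Finset.mul_sum]

end CornerWeight

section Simplex

variable {n : ℕ} {c : ℝ}

lemma measurableSet_simplexSet : MeasurableSet (simplexSet n c) := by
  have : simplexSet n c = (⋂ i, {x | 0 ≤ x i}) ∩ {x | ∑ i, x i ≤ c} := by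
    ext x; simp [simplexSet]
  rw [this]
  exact (MeasurableSet.iInter fun i =>
    measurableSet_le measurable_const (measurable_pi_apply i)).inter
      (measurableSet_le (by fun_prop) measurable_const)

lemma simplexSet_subset_Icc : simplexSet n c ⊆ Set.Icc 0 fun _ => c := fun _ hx =>
  ⟨hx.1, fun i => (Finset.single_le_sum (fun j _ => hx.1 j) (Finset.mem_univ i)).trans hx.2⟩

lemma volume_simplexSet_lt_top : volume (simplexSet n c) < ⊤ :=
  (measure_mono simplexSet_subset_Icc).trans_lt isCompact_Icc.measure_lt_top

def simplexVertex (c : ℝ) : Option (Fin n) → Fin n → ℝ :=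
  fun o => o.elim 0 fun i => Pi.single i c

lemma simplexVertex_mem (hc : 0 ≤ c) (o : Option (Fin n)) : simplexVertex c o ∈ simplexSet n c := by
  cases o with
  | none => exact ⟨fun _ => le_rfl, by simpa [simplexVertex] using hc⟩
  | some i =>
    refine ⟨fun j => ?_, by simp [simplexVertex]⟩
    by_cases h : j = i <;> simp [simplexVertex, h, hc]

lemma simplexSet_subset_convexHull (hc : 0 < c) :
    simplexSet n c ⊆ convexHull ℝ (Set.range (simplexVertex (n := n) c)) := by
  intro x hx
  refine mem_convexHull_of_exists_fintype
    (fun o => o.elim (1 - (∑ i, x i) / c) fun i => x i / c) (simplexVertex c) (fun o => ?_)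
    ?_ (fun o => Set.mem_range_self o) ?_
  · cases o with
    | none => simpa [sub_nonneg, div_le_one hc] using hx.2
    | some i => exact div_nonneg (hx.1 i) hc.le
  · simp [Fintype.sum_option, Finset.sum_div]
  · ext j
    simp [Fintype.sum_option, simplexVertex, Finset.sum_apply, Pi.single_apply, hc.ne']

lemma ConvexOn.bddAbove_image_simplexSet (hc : 0 < c) {f : (Fin n → ℝ) → ℝ}
    (hf : ConvexOn ℝ (simplexSet n c) f) : BddAbove (f '' simplexSet n c) := by
  obtain ⟨M, hM⟩ := ((Set.finite_range (simplexVertex (n := n) c)).image f).bddAbove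
  refine ⟨M, Set.forall_mem_image.2 fun x hx => ?_⟩
  obtain ⟨y, hy, hxy⟩ := hf.exists_ge_of_mem_convexHull
    (Set.range_subset_iff.2 (simplexVertex_mem hc.le)) (simplexSet_subset_convexHull hc hx)
  exact hxy.trans (hM ⟨y, hy, rfl⟩)

lemma ConvexOn.integrableOn_simplexSet (hc : 0 < c) {f : (Fin n → ℝ) → ℝ} {L : ℝ}
    (hf : ConvexOn ℝ (simplexSet n c) f) (hL : ∀ x ∈ simplexSet n c, L ≤ f x) :
    IntegrableOn f (simplexSet n c) := by
  obtain ⟨M, hM⟩ := hf.bddAbove_image_simplexSet hc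
  refine ⟨hf.aestronglyMeasurable_restrict, .restrict_of_bounded (C := max |L| |M|)
    volume_simplexSet_lt_top ?_⟩
  filter_upwards [ae_restrict_mem measurableSet_simplexSet] with x hx
  exact abs_le_max_abs_abs (hL x hx) (hM ⟨x, hx, rfl⟩)

end Simplex

lemma mem_simplexLattice {n K : ℕ} {m : Fin n → ℕ} : m ∈ simplexLattice n K ↔ ∑ i, m i ≤ K := by
  refine ⟨fun h => (Finset.mem_filter.1 h).2, fun h => Finset.mem_filter.2 ⟨?_, h⟩⟩
  exact Fintype.mem_piFinset.2 fun i => Finset.mem_range_succ_iff.2 <|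
    (Finset.single_le_sum (fun j _ => Nat.zero_le (m j)) (Finset.mem_univ i)).trans h

lemma sum_sum_simplexLattice_add_toNat_le {n K : ℕ} (hnK : n ≤ K) {G : (Fin n → ℕ) → ℝ}
    (hG : ∀ α ∈ simplexLattice n K, 0 ≤ G α) :
    ∑ e : Fin n → Bool, ∑ m ∈ simplexLattice n (K - n), G (m + fun i => (e i).toNat)
      ≤ 2 ^ n * ∑ α ∈ simplexLattice n K, G α := by
  have hshift : ∀ e : Fin n → Bool, ∑ m ∈ simplexLattice n (K - n), G (m + fun i => (e i).toNat)
      ≤ ∑ α ∈ simplexLattice n K, G α := by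
    intro e
    rw [← Finset.sum_image (add_left_injective _).injOn]
    refine Finset.sum_le_sum_of_subset_of_nonneg (fun α hα => ?_) fun α hα _ => hG α hα
    obtain ⟨m, hm, rfl⟩ := Finset.mem_image.1 hα
    have hm' := mem_simplexLattice.1 hm
    have he : ∑ i, (e i).toNat ≤ n := by
      simpa using Finset.sum_le_sum fun i (_ : i ∈ Finset.univ) => Bool.toNat_le (e i)
    rw [mem_simplexLattice]
    simp only [Pi.add_apply, Finset.sum_add_distrib]
    omega
  calc _ ≤ ∑ _e : Fin n → Bool, ∑ α ∈ simplexLattice n K, G α :=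
        Finset.sum_le_sum fun e _ => hshift e
    _ = _ := by simp

section Lattice

variable {n K k : ℕ} {c : ℝ}

def latticeCube (k : ℕ) (m : Fin n → ℕ) : Set (Fin n → ℝ) :=
  Set.univ.pi fun i => Set.Icc ((m i : ℝ) / k) ((m i : ℝ) / k + 1 / k)

lemma latticeCube_subset_simplexSet (hk : 0 < k) (hkc : (k : ℝ) * c = K) (hnK : n ≤ K)
    {m : Fin n → ℕ} (hm : m ∈ simplexLattice n (K - n)) : latticeCube k m ⊆ simplexSet n c := by
  have hk' : (0 : ℝ) < k := by exact_mod_cast hk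
  intro x hx
  have hxk : ∀ i, (k : ℝ) * x i ≤ m i + 1 := fun i => by
    have := (hx i (Set.mem_univ i)).2
    rw [← add_div, le_div_iff₀ hk'] at this
    linarith
  have hmK : ((∑ i, m i : ℕ) : ℝ) + n ≤ K := by
    exact_mod_cast (by have := mem_simplexLattice.1 hm; omega : ∑ i, m i + n ≤ K)
  refine ⟨fun i => (div_nonneg (Nat.cast_nonneg _) hk'.le).trans (hx i (Set.mem_univ i)).1, ?_⟩
  refine le_of_mul_le_mul_left ?_ hk'
  calc (k : ℝ) * ∑ i, x i ≤ ∑ i, ((m i : ℝ) + 1) := by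
        rw [Finset.mul_sum]; exact Finset.sum_le_sum fun i _ => hxk i
    _ ≤ k * c := by simpa [Finset.sum_add_distrib, hkc] using hmK

lemma simplexSet_subset_biUnion_latticeCube (hk : 0 < k) (hkc : (k : ℝ) * c = K) (hnK : n ≤ K) :
    simplexSet n (c - (n - 1) / k) ⊆ ⋃ m ∈ simplexLattice n (K - n), latticeCube k m := by
  have hk' : (0 : ℝ) < k := by exact_mod_cast hk
  intro x hx
  -- Not `⌊k xᵢ⌋₊`: that would miss the points with `∑ k xᵢ = K - n + 1` and all `k xᵢ` integral.
  set m : Fin n → ℕ := fun i => ⌈k * x i⌉₊ - 1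
  have hsum : (k : ℝ) * ∑ i, x i ≤ ((K - n : ℕ) : ℝ) + 1 := by
    have := mul_le_mul_of_nonneg_left hx.2 hk'.le
    rw [Nat.cast_sub hnK]
    rw [mul_sub, hkc, mul_div_cancel₀ _ hk'.ne'] at this
    linarith
  refine Set.mem_biUnion (x := m) (mem_simplexLattice.2 ?_) fun i _ => ⟨?_, ?_⟩
  · by_cases hpos : ∃ j, 0 < x j
    · obtain ⟨j, hj⟩ := hpos
      have hlt : ((∑ i, m i : ℕ) : ℝ) < ((K - n : ℕ) : ℝ) + 1 := by
        push_cast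
        calc ∑ i, (m i : ℝ) < ∑ i, k * x i :=
              Finset.sum_lt_sum (fun i _ => natCast_ceil_sub_one_le (by nlinarith [hx.1 i]))
                ⟨j, Finset.mem_univ j, natCast_ceil_sub_one_lt (by positivity)⟩
          _ ≤ _ := by rwa [← Finset.mul_sum]
      exact Nat.lt_succ_iff.1 (by exact_mod_cast hlt)
    · simp only [not_exists, not_lt] at hpos
      have hm0 : ∀ i, m i = 0 := fun i => by
        simp [m, Nat.ceil_eq_zero.2 (mul_nonpos_of_nonneg_of_nonpos hk'.le (hpos i))]
      simp [hm0]
  · rw [div_le_iff₀' hk']; exact natCast_ceil_sub_one_le (mul_nonneg hk'.le (hx.1 i))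
  · rw [← add_div, le_div_iff₀' hk']; exact le_natCast_ceil_sub_one_add_one _

lemma natCast_div_mem_simplexSet (hk : 0 < k) (hkc : (k : ℝ) * c = K) {α : Fin n → ℕ}
    (hα : α ∈ simplexLattice n K) : (fun i => (α i : ℝ) / k) ∈ simplexSet n c := by
  have hk' : (0 : ℝ) < k := by exact_mod_cast hk
  refine ⟨fun i => by positivity, ?_⟩
  rw [← Finset.sum_div, div_le_iff₀ hk', mul_comm, hkc]
  exact_mod_cast mem_simplexLattice.1 hα

lemma simplexSet_sub_subset (hk : 0 < k) (hkc : (k : ℝ) * c = K) (hnK : n ≤ K) :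
    simplexSet n (c - (n - 1) / k) ⊆ simplexSet n c :=
  (simplexSet_subset_biUnion_latticeCube hk hkc hnK).trans <|
    Set.iUnion₂_subset fun _ hm => latticeCube_subset_simplexSet hk hkc hnK hm

lemma ConvexOn.setIntegral_latticeCube_le (hk : 0 < k) (hkc : (k : ℝ) * c = K) (hnK : n ≤ K)
    {g : (Fin n → ℝ) → ℝ} (hg : ConvexOn ℝ (simplexSet n c) g)
    (hgi : IntegrableOn g (simplexSet n c)) {m : Fin n → ℕ} (hm : m ∈ simplexLattice n (K - n)) :
    ∫ x in latticeCube k m, g x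
      ≤ (1 / (2 * k)) ^ n *
          ∑ e : Fin n → Bool, g fun i => ((m + fun i => (e i).toNat) i : ℝ) / k := by
  have hQ := latticeCube_subset_simplexSet hk hkc hnK hm
  have hvertex : ∀ e : Fin n → Bool,
      (fun i => (m i : ℝ) / k) + (1 / k : ℝ) • (fun i => ((e i).toNat : ℝ))
        = fun i => ((m + fun i => (e i).toNat) i : ℝ) / k := fun e => by
    ext i
    simp only [Pi.add_apply, Pi.smul_apply, smul_eq_mul, Nat.cast_add]
    ring
  calc ∫ x in latticeCube k m, g x
      ≤ (1 / k / 2) ^ Fintype.card (Fin n) * ∑ e : Fin n → Bool,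
          g ((fun i => (m i : ℝ) / k) + (1 / k : ℝ) • fun i => ((e i).toNat : ℝ)) :=
        hg.setIntegral_pi_Icc_le _ (by positivity) hQ (hgi.mono_set hQ)
    _ = _ := by simp_rw [hvertex, Fintype.card_fin, div_div, mul_comm (k : ℝ) 2]

theorem pow_mul_setIntegral_le_sum_simplexLattice (hk : 0 < k) (hkc : (k : ℝ) * c = K)
    (hnK : n ≤ K) {g : (Fin n → ℝ) → ℝ} (hg : ConvexOn ℝ (simplexSet n c) g)
    (hg0 : ∀ x ∈ simplexSet n c, 0 ≤ g x) (hgi : IntegrableOn g (simplexSet n c)) :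
    (k : ℝ) ^ n * ∫ x in simplexSet n (c - (n - 1) / k), g x
      ≤ ∑ α ∈ simplexLattice n K, g fun i => (α i : ℝ) / k := by
  have hk' : (0 : ℝ) < k := by exact_mod_cast hk
  have hQ := fun m (hm : m ∈ simplexLattice n (K - n)) =>
    latticeCube_subset_simplexSet hk hkc hnK hm
  calc (k : ℝ) ^ n * ∫ x in simplexSet n (c - (n - 1) / k), g x
      ≤ (k : ℝ) ^ n * ∑ m ∈ simplexLattice n (K - n), ∫ x in latticeCube k m, g x := by
        gcongr
        exact setIntegral_le_sum_setIntegral_of_subset_biUnion measurableSet_simplexSet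
          (fun m _ => MeasurableSet.univ_pi fun _ => measurableSet_Icc)
          (simplexSet_subset_biUnion_latticeCube hk hkc hnK)
          (fun m hm x hx => hg0 x (hQ m hm hx)) fun m hm => hgi.mono_set (hQ m hm)
    _ ≤ (k : ℝ) ^ n * ∑ m ∈ simplexLattice n (K - n), (1 / (2 * k)) ^ n *
          ∑ e : Fin n → Bool, g fun i => ((m + fun i => (e i).toNat) i : ℝ) / k := by
        gcongr with m hm
        exact hg.setIntegral_latticeCube_le hk hkc hnK hgi hm
    _ = (1 / 2) ^ n * ∑ e : Fin n → Bool, ∑ m ∈ simplexLattice n (K - n),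
          g fun i => ((m + fun i => (e i).toNat) i : ℝ) / k := by
        rw [Finset.sum_comm, ← Finset.mul_sum, ← mul_assoc, ← mul_pow]
        field_simp
    _ ≤ (1 / 2) ^ n * (2 ^ n * ∑ α ∈ simplexLattice n K, g fun i => (α i : ℝ) / k) := by
        gcongr
        exact sum_sum_simplexLattice_add_toNat_le (G := fun α => g fun i => (α i : ℝ) / k) hnK
          fun α hα => hg0 _ (natCast_div_mem_simplexSet hk hkc hα)
    _ = _ := by rw [← mul_assoc, ← mul_pow]; norm_num

end Lattice

theorem stmt_3_general (n : ℕ) (c : ℚ) (hc0 : 0 < c)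
    (L : ℝ) (f : (Fin n → ℝ) → ℝ)
    (hconv : ConvexOn ℝ (simplexSet n (c : ℝ)) f)
    (hL : ∀ x ∈ simplexSet n (c : ℝ), L ≤ f x) :
    ∃ k₀ : ℕ, ∀ k : ℕ, k₀ ≤ k → ∀ K : ℕ, (k : ℝ) * (c : ℝ) = (K : ℝ) →
      (k : ℝ) ^ n * (∫ x in simplexSet n ((c : ℝ) - ((n : ℝ) - 1) / (k : ℝ)), f x)
        - (k : ℝ) ^ n * L *
            (volume (simplexSet n ((c : ℝ) - ((n : ℝ) - 1) / (k : ℝ)))).toReal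
        + L * ((simplexLattice n K).card : ℝ)
      ≤ ∑ m ∈ simplexLattice n K, f fun i => (m i : ℝ) / (k : ℝ) := by
  have hc : (0 : ℝ) < c := by exact_mod_cast hc0
  have hfi := hconv.integrableOn_simplexSet hc hL
  refine ⟨⌈(n : ℝ) / c⌉₊ + 1, fun k hk K hkc => ?_⟩
  have hnK : n ≤ K := by
    have : (n : ℝ) / c ≤ k := (Nat.le_ceil _).trans (by exact_mod_cast hk.trans' (Nat.le_succ _))
    rw [div_le_iff₀ hc, hkc] at this
    exact_mod_cast this
  have hfi' := hfi.mono_set (simplexSet_sub_subset (by omega) hkc hnK)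
  have key := pow_mul_setIntegral_le_sum_simplexLattice (by omega) hkc hnK
    (hconv.sub (concaveOn_const L hconv.1)) (fun x hx => sub_nonneg.2 (hL x hx))
    (hfi.sub (integrableOn_const volume_simplexSet_lt_top.ne))
  simp only [Pi.sub_apply] at key
  rw [integral_sub hfi' (integrableOn_const volume_simplexSet_lt_top.ne), setIntegral_const,
    Finset.sum_sub_distrib, Finset.sum_const, measureReal_def] at key
  simp only [smul_eq_mul, nsmul_eq_mul] at key
  linarith

/-- Inequality (6.4): if `f` is convex on `Δ_c` with `f ≥ L`, then for all
sufficiently large `k` with `kc ∈ ℤ`,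
`∑_{α ∈ Δ_c ∩ (1/k)ℤⁿ} f(α) ≥ kⁿ ∫_{Δ_{c−(n−1)/k}} f dμ − kⁿ L Vol(Δ_{c−(n−1)/k})
  + L · #(Δ_c ∩ (1/k)ℤⁿ)`. -/
theorem stmt_3 (n : ℕ) (hn : 2 ≤ n) (c : ℚ) (hc0 : 0 < c) (hc1 : c < 1)
    (L : ℝ) (f : (Fin n → ℝ) → ℝ)
    (hconv : ConvexOn ℝ (simplexSet n (c : ℝ)) f)
    (hL : ∀ x ∈ simplexSet n (c : ℝ), L ≤ f x) :
    ∃ k₀ : ℕ, ∀ k : ℕ, k₀ ≤ k → ∀ K : ℕ, (k : ℝ) * (c : ℝ) = (K : ℝ) →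
      (k : ℝ) ^ n * (∫ x in simplexSet n ((c : ℝ) - ((n : ℝ) - 1) / (k : ℝ)), f x)
        - (k : ℝ) ^ n * L *
            (volume (simplexSet n ((c : ℝ) - ((n : ℝ) - 1) / (k : ℝ)))).toReal
        + L * ((simplexLattice n K).card : ℝ)
      ≤ ∑ m ∈ simplexLattice n K, f fun i => (m i : ℝ) / (k : ℝ) :=
  stmt_3_general n c hc0 L f hconv hL
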